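/- Let u_n ⇀ u weakly in L²(ℝ^N), u_n → u almost everywhere, and q : ℝ → [0,∞) continuous with q(u_n) integrable. If ∫ m|u_n|² + q(u_n) dx → ∫ m|u|² + q(u) dx with m > 0 and ∫q(u) dx < ∞, then u_n → u strongly in L²(ℝ^N). -/

import Mathlib

/-!
Fatou's lemma gives `∫ m uₙ² ≥ ∫ m u² - ε` and `∫ q(uₙ) ≥ ∫ q(u) - ε` eventually; since the sums
of the two integrals converge to the sum of the limits, neither part can overshoot, so
`‖uₙ‖₂ → ‖u‖₂`. Weak convergence tested against `u` gives `∫ uₙ u → ‖u‖₂²`, and expanding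
`‖uₙ - u‖₂² = ‖uₙ‖₂² - 2 ∫ uₙ u + ‖u‖₂²` shows that it tends to `0`.
-/

open MeasureTheory Filter Topology

theorem tendsto_of_tendsto_add_of_eventually_gt {ι : Type*} {l : Filter ι} {x y : ι → ℝ}
    {x₀ y₀ : ℝ} (hx : ∀ a < x₀, ∀ᶠ i in l, a < x i) (hy : ∀ b < y₀, ∀ᶠ i in l, b < y i)
    (hxy : Tendsto (fun i => x i + y i) l (𝓝 (x₀ + y₀))) : Tendsto x l (𝓝 x₀) := by
  refine tendsto_order.2 ⟨hx, fun a ha => ?_⟩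
  have hε : 0 < (a - x₀) / 2 := by linarith
  filter_upwards [hy _ (sub_lt_self y₀ hε),
    hxy.eventually (gt_mem_nhds (lt_add_of_pos_right _ hε))] with i hyi hxyi
  linarith

variable {α : Type*} [MeasurableSpace α] {μ : Measure α}

theorem eventually_lt_integral_of_ae_tendsto {f : ℕ → α → ℝ} {g : α → ℝ}
    (hf : ∀ n, Integrable (f n) μ) (hf_nonneg : ∀ n, 0 ≤ᵐ[μ] f n) (hg : Integrable g μ)
    (hlim : ∀ᵐ x ∂μ, Tendsto (fun n => f n x) atTop (𝓝 (g x))) {a : ℝ}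
    (ha : a < ∫ x, g x ∂μ) : ∀ᶠ n in atTop, a < ∫ x, f n x ∂μ := by
  rcases lt_or_ge a 0 with ha₀ | ha₀
  · exact Eventually.of_forall fun n => ha₀.trans_le (integral_nonneg_of_ae (hf_nonneg n))
  have hg_nonneg : 0 ≤ᵐ[μ] g := by
    filter_upwards [hlim, ae_all_iff.2 hf_nonneg] with x hx hfx
    exact ge_of_tendsto' hx hfx
  have hfatou : ∫⁻ x, ENNReal.ofReal (g x) ∂μ ≤
      liminf (fun n => ∫⁻ x, ENNReal.ofReal (f n x) ∂μ) atTop := by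
    calc ∫⁻ x, ENNReal.ofReal (g x) ∂μ
        = ∫⁻ x, liminf (fun n => ENNReal.ofReal (f n x)) atTop ∂μ :=
          lintegral_congr_ae <| hlim.mono fun x hx =>
            ((ENNReal.continuous_ofReal.tendsto _).comp hx).liminf_eq.symm
      _ ≤ _ := lintegral_liminf_le' fun n => (hf n).aemeasurable.ennreal_ofReal
  have hlt : ENNReal.ofReal a < liminf (fun n => ∫⁻ x, ENNReal.ofReal (f n x) ∂μ) atTop := by
    refine lt_of_lt_of_le ?_ hfatou
    rw [← ofReal_integral_eq_lintegral_ofReal hg hg_nonneg]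
    exact (ENNReal.ofReal_lt_ofReal_iff (ha₀.trans_lt ha)).2 ha
  filter_upwards [eventually_lt_of_lt_liminf hlt] with n hn
  rw [← ofReal_integral_eq_lintegral_ofReal (hf n) (hf_nonneg n)] at hn
  exact (ENNReal.ofReal_lt_ofReal_iff'.1 hn).1

theorem tendsto_integral_of_tendsto_integral_add {f g : ℕ → α → ℝ} {f₀ g₀ : α → ℝ}
    (hf : ∀ n, Integrable (f n) μ) (hg : ∀ n, Integrable (g n) μ)
    (hf_nonneg : ∀ n, 0 ≤ᵐ[μ] f n) (hg_nonneg : ∀ n, 0 ≤ᵐ[μ] g n)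
    (hf₀ : Integrable f₀ μ) (hg₀ : Integrable g₀ μ)
    (hf_lim : ∀ᵐ x ∂μ, Tendsto (fun n => f n x) atTop (𝓝 (f₀ x)))
    (hg_lim : ∀ᵐ x ∂μ, Tendsto (fun n => g n x) atTop (𝓝 (g₀ x)))
    (hfg : Tendsto (fun n => ∫ x, f n x + g n x ∂μ) atTop (𝓝 (∫ x, f₀ x + g₀ x ∂μ))) :
    Tendsto (fun n => ∫ x, f n x ∂μ) atTop (𝓝 (∫ x, f₀ x ∂μ)) := by
  refine tendsto_of_tendsto_add_of_eventually_gt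
    (fun a ha => eventually_lt_integral_of_ae_tendsto hf hf_nonneg hf₀ hf_lim ha)
    (fun b hb => eventually_lt_integral_of_ae_tendsto hg hg_nonneg hg₀ hg_lim hb) ?_
  simpa only [integral_add (hf _) (hg _), integral_add hf₀ hg₀] using hfg

theorem MeasureTheory.MemLp.integral_sub_sq {f g : α → ℝ} (hf : MemLp f 2 μ) (hg : MemLp g 2 μ) :
    ∫ x, (f x - g x) ^ 2 ∂μ = ∫ x, f x ^ 2 ∂μ - 2 * ∫ x, f x * g x ∂μ + ∫ x, g x ^ 2 ∂μ := by
  have hfg : Integrable (fun x => 2 * (f x * g x)) μ := (hf.integrable_mul hg).const_mul 2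
  simp_rw [sub_sq, mul_assoc]
  rw [integral_add ?_ hg.integrable_sq, integral_sub hf.integrable_sq hfg, integral_const_mul]
  exact hf.integrable_sq.sub hfg

theorem MeasureTheory.MemLp.eLpNorm_two_eq_ofReal_sqrt {f : α → ℝ} (hf : MemLp f 2 μ) :
    eLpNorm f 2 μ = ENNReal.ofReal √(∫ x, f x ^ 2 ∂μ) := by
  rw [hf.eLpNorm_eq_integral_rpow_norm two_ne_zero ENNReal.ofNat_ne_top, Real.sqrt_eq_rpow]
  simp

theorem tendsto_eLpNorm_sub_of_tendsto_integral_sq {ι : Type*} {l : Filter ι}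
    {u : ι → α → ℝ} {v : α → ℝ} (hu : ∀ i, MemLp (u i) 2 μ) (hv : MemLp v 2 μ)
    (hnorm : Tendsto (fun i => ∫ x, u i x ^ 2 ∂μ) l (𝓝 (∫ x, v x ^ 2 ∂μ)))
    (hweak : Tendsto (fun i => ∫ x, u i x * v x ∂μ) l (𝓝 (∫ x, v x ^ 2 ∂μ))) :
    Tendsto (fun i => eLpNorm (u i - v) 2 μ) l (𝓝 0) := by
  have hdist : Tendsto (fun i => ∫ x, (u i x - v x) ^ 2 ∂μ) l (𝓝 0) := by
    simp_rw [(hu _).integral_sub_sq hv]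
    convert (hnorm.sub (hweak.const_mul 2)).add (tendsto_const_nhds (x := ∫ x, v x ^ 2 ∂μ))
      using 2
    ring
  simp_rw [((hu _).sub hv).eLpNorm_two_eq_ofReal_sqrt]
  simpa [Function.comp_def] using
    ((ENNReal.continuous_ofReal.comp Real.continuous_sqrt).tendsto 0).comp hdist

/-- If `uₙ ⇀ u` weakly in `L²`, `uₙ → u` a.e., `q ≥ 0` is continuous, and
`∫ m|uₙ|² + q(uₙ) → ∫ m|u|² + q(u)` with `m > 0`, then `uₙ → u` strongly in `L²`. -/
theorem stmt_14 (N : ℕ) (m : ℝ) (hm : 0 < m)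
    (u : ℕ → EuclideanSpace ℝ (Fin N) → ℝ) (ulim : EuclideanSpace ℝ (Fin N) → ℝ)
    (hu2 : ∀ n, MemLp (u n) 2 (volume : Measure (EuclideanSpace ℝ (Fin N))))
    (hulim2 : MemLp ulim 2 (volume : Measure (EuclideanSpace ℝ (Fin N))))
    (hweak : ∀ φ : EuclideanSpace ℝ (Fin N) → ℝ,
      MemLp φ 2 (volume : Measure (EuclideanSpace ℝ (Fin N))) →
      Tendsto (fun n => ∫ x, u n x * φ x) atTop (nhds (∫ x, ulim x * φ x)))
    (hae : ∀ᵐ x : EuclideanSpace ℝ (Fin N), Tendsto (fun n => u n x) atTop (nhds (ulim x)))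
    (q : ℝ → ℝ) (hqcont : Continuous q) (hqnonneg : ∀ t, 0 ≤ q t)
    (hqint : ∀ n, Integrable (fun x : EuclideanSpace ℝ (Fin N) => q (u n x)))
    (hqlim : Integrable (fun x : EuclideanSpace ℝ (Fin N) => q (ulim x)))
    (hconv : Tendsto
      (fun n => ∫ x : EuclideanSpace ℝ (Fin N), (m * (u n x) ^ 2 + q (u n x)))
      atTop (nhds (∫ x : EuclideanSpace ℝ (Fin N), (m * (ulim x) ^ 2 + q (ulim x))))) :
    Tendsto (fun n => eLpNorm (fun x => u n x - ulim x) 2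
      (volume : Measure (EuclideanSpace ℝ (Fin N)))) atTop (nhds 0) := by
  have hsq : Tendsto (fun n => ∫ x, m * u n x ^ 2) atTop (𝓝 (∫ x, m * ulim x ^ 2)) :=
    tendsto_integral_of_tendsto_integral_add (fun n => (hu2 n).integrable_sq.const_mul m)
      hqint (fun n => Eventually.of_forall fun x => by positivity)
      (fun n => Eventually.of_forall fun x => hqnonneg _) (hulim2.integrable_sq.const_mul m)
      hqlim (hae.mono fun x hx => (hx.pow 2).const_mul m)
      (hae.mono fun x hx => (hqcont.tendsto _).comp hx) hconv
  have hnorm : Tendsto (fun n => ∫ x, u n x ^ 2) atTop (𝓝 (∫ x, ulim x ^ 2)) := by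
    simpa only [integral_const_mul, inv_mul_cancel_left₀ hm.ne'] using hsq.const_mul m⁻¹
  have hinner : Tendsto (fun n => ∫ x, u n x * ulim x) atTop (𝓝 (∫ x, ulim x ^ 2)) := by
    simpa only [← sq] using hweak ulim hulim2
  exact tendsto_eLpNorm_sub_of_tendsto_integral_sq hu2 hulim2 hnorm hinner
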